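/- arXiv:1110.3850 — 7 statements merged into one kernel-verified Lean document; each statement's English description precedes it below -/
import Mathlib

section
/- Let n ∈ ℕ, j ∈ {1,…,n}, let σ ∈ {−1,1}, let x_j, ε_a, ε_b ∈ ℝ and K ≥ 0 be real numbers satisfying |ε_a| ≤ K, |ε_b| ≤ 2nK, and |x_j| > (8n+1)K. Then σ·x_j + ε_a ≠ 0 and |(σ·(n+j)·x_j + ε_b)/(σ·x_j + ε_a) − (n+j)| < 1/2. In particular, the nearest integer to (σ(n+j)x_j + ε_b)/(σx_j + ε_a) − n is j. -/
/-!
Writing `y = σ xⱼ` and `c = n + j`, the numerator is `c (y + ε_a) + (ε_b - c ε_a)`, so the ratio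
differs from `c` by `(ε_b - c ε_a) / (y + ε_a)`. Since `c ≤ 2n`, this error term has numerator at
most `4nK` in absolute value and denominator larger than `8nK`, hence is smaller than `1/2`.
-/

theorem perturbed_ratio_sub_eq {𝕜 : Type*} [Field 𝕜] {c y εa εb : 𝕜} (h : y + εa ≠ 0) :
    (c * y + εb) / (y + εa) - c = (εb - c * εa) / (y + εa) := by
  field_simp
  ring

section LinearOrderedField

variable {𝕜 : Type*} [Field 𝕜] [LinearOrder 𝕜] [IsStrictOrderedRing 𝕜]

theorem abs_perturbed_ratio_sub_lt_half {c y εa εb : 𝕜} (h : 2 * |εb - c * εa| < |y + εa|) :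
    |(c * y + εb) / (y + εa) - c| < 1 / 2 := by
  have hpos : 0 < |y + εa| := (mul_nonneg zero_le_two (abs_nonneg _)).trans_lt h
  rw [perturbed_ratio_sub_eq (abs_pos.mp hpos), abs_div, div_lt_iff₀ hpos]
  linarith

theorem round_eq_of_abs_sub_lt_half [FloorRing 𝕜] {x : 𝕜} {k : ℤ} (h : |x - k| < 1 / 2) :
    round x = k := by
  obtain ⟨hlo, hhi⟩ := abs_lt.mp h
  rw [round_eq_iff]
  constructor <;> linarith

end LinearOrderedField

theorem stmt0_general (n j : ℕ) (hjn : j ≤ n)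
    (σ xj εa εb K : ℝ) (hσ : σ = 1 ∨ σ = -1)
    (ha : |εa| ≤ K) (hb : |εb| ≤ 2 * n * K)
    (hx : |xj| > (8 * n + 1) * K) :
    σ * xj + εa ≠ 0 ∧
    |(σ * ((n : ℝ) + j) * xj + εb) / (σ * xj + εa) - ((n : ℝ) + j)| < 1 / 2 ∧
    round ((σ * ((n : ℝ) + j) * xj + εb) / (σ * xj + εa) - (n : ℝ)) = (j : ℤ) := by
  have hK : 0 ≤ K := (abs_nonneg εa).trans ha
  have hc : |(n : ℝ) + j| ≤ 2 * n := by
    rw [abs_of_nonneg (by positivity)]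
    linarith [(Nat.cast_le (α := ℝ)).mpr hjn]
  have hnum : |εb - ((n : ℝ) + j) * εa| ≤ 4 * n * K := by
    have hcεa : |((n : ℝ) + j) * εa| ≤ 2 * n * K := by
      rw [abs_mul]
      exact mul_le_mul hc ha (abs_nonneg _) (by positivity)
    linarith [abs_sub εb (((n : ℝ) + j) * εa)]
  have hden : 8 * n * K < |σ * xj + εa| := by
    have hσxj : |σ * xj| = |xj| := by rcases hσ with rfl | rfl <;> simp
    have hrev := abs_sub_abs_le_abs_sub (σ * xj) (-εa)
    rw [abs_neg, sub_neg_eq_add, hσxj] at hrev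
    linarith
  have hhalf := abs_perturbed_ratio_sub_lt_half (c := (n : ℝ) + j) (y := σ * xj) (εa := εa)
    (εb := εb) (by linarith)
  rw [show σ * ((n : ℝ) + j) * xj = ((n : ℝ) + j) * (σ * xj) by ring]
  refine ⟨abs_pos.mp ((by positivity : (0 : ℝ) ≤ 8 * n * K).trans_lt hden), hhalf, ?_⟩
  exact round_eq_of_abs_sub_lt_half (by push_cast; rwa [sub_sub])

/-- Deterministic core of the two-measurement 1-sparse recovery estimator. -/
theorem stmt0 (n j : ℕ) (hj1 : 1 ≤ j) (hjn : j ≤ n)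
    (σ xj εa εb K : ℝ) (hσ : σ = 1 ∨ σ = -1) (hK : 0 ≤ K)
    (ha : |εa| ≤ K) (hb : |εb| ≤ 2 * n * K)
    (hx : |xj| > (8 * n + 1) * K) :
    σ * xj + εa ≠ 0 ∧
    |(σ * ((n : ℝ) + j) * xj + εb) / (σ * xj + εa) - ((n : ℝ) + j)| < 1 / 2 ∧
    round ((σ * ((n : ℝ) + j) * xj + εb) / (σ * xj + εa) - (n : ℝ)) = (j : ℤ) :=
  stmt0_general n j hjn σ xj εa εb K hσ ha hb hx
end

section
/- Let (Ω, P) be a probability space and s₁,…,sₙ : Ω → ℝ be random variables, each uniformly distributed on {−1,1}, and pairwise independent. Let δ ∈ (0,1), x ∈ ℝⁿ and j ∈ {1,…,n}, and suppose |x_j| > (8n+1)·√(1/δ)·‖x restricted to {1,…,n}∖{j}‖₂. Define the random variables a = Σ_{i=1}^n sᵢ xᵢ and b = Σ_{i=1}^n (n+i) sᵢ xᵢ. Then with probability at least 1 − 2δ, a ≠ 0 and |b/a − (n+j)| < 1/2 (so that the nearest integer to b/a − n equals j). -/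
/-!
Write `a = s_j x_j + r` and `b - (n + j) a = t`, where `r` and `t` are Rademacher sums over the
coordinates `i ≠ j` with coefficients `x_i` and `(i - j) x_i`. Pairwise independence is enough to
make the variances of such sums add, so Chebyshev bounds `|r| < u` and `|t| < n u` outside events
of probability `δ` each, for a threshold `u` just above `‖x_{-j}‖₂ / √δ`. On the complement,
`|a| ≥ |x_j| - |r| > 8 n u`, hence `|b / a - (n + j)| = |t| / |a| < 1 / 2`.
-/

open MeasureTheory ProbabilityTheory

def IsRademacher {Ω : Type*} [MeasurableSpace Ω] (X : Ω → ℝ) (P : Measure Ω) : Prop :=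
  P {ω | X ω = 1} = 1 / 2 ∧ P {ω | X ω = -1} = 1 / 2

namespace IsRademacher

variable {Ω : Type*} [MeasurableSpace Ω] {P : Measure Ω} [IsProbabilityMeasure P] {X : Ω → ℝ}

theorem ae_eq_one_or_eq_neg_one (hX : Measurable X) (h : IsRademacher X P) :
    ∀ᵐ ω ∂P, X ω = 1 ∨ X ω = -1 := by
  have h1 : MeasurableSet {ω | X ω = 1} := hX (measurableSet_singleton 1)
  have h2 : MeasurableSet {ω | X ω = -1} := hX (measurableSet_singleton (-1))
  have hdisj : Disjoint {ω | X ω = 1} {ω | X ω = -1} :=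
    Set.disjoint_left.2 fun ω (h1 : X ω = 1) (h2 : X ω = -1) => by norm_num [h1] at h2
  rw [ae_iff_measure_eq (p := fun ω => X ω = 1 ∨ X ω = -1) (h1.union h2).nullMeasurableSet,
    Set.ofPred_or, measure_union hdisj h2, h.1, h.2, measure_univ, one_div,
    ENNReal.inv_two_add_inv_two]

theorem ae_abs_eq_one (hX : Measurable X) (h : IsRademacher X P) : ∀ᵐ ω ∂P, |X ω| = 1 := by
  filter_upwards [h.ae_eq_one_or_eq_neg_one hX] with ω hω
  rcases hω with hω | hω <;> simp [hω]

theorem memLp (hX : Measurable X) (h : IsRademacher X P) (p : ENNReal) : MemLp X p P :=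
  MemLp.of_bound hX.aestronglyMeasurable 1 <| by
    filter_upwards [h.ae_abs_eq_one hX] with ω hω using hω.le

theorem integral_eq_zero (hX : Measurable X) (h : IsRademacher X P) : P[X] = 0 := by
  have h1 : MeasurableSet {ω | X ω = 1} := hX (measurableSet_singleton 1)
  have h2 : MeasurableSet {ω | X ω = -1} := hX (measurableSet_singleton (-1))
  have hsplit : X =ᵐ[P] fun ω => {ω | X ω = 1}.indicator 1 ω - {ω | X ω = -1}.indicator 1 ω := by
    filter_upwards [h.ae_eq_one_or_eq_neg_one hX] with ω hω
    rcases hω with hω | hω <;> norm_num [Set.indicator_apply, hω]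
  rw [integral_congr_ae hsplit, integral_sub ((integrable_const 1).indicator h1)
    ((integrable_const 1).indicator h2), integral_indicator_one h1, integral_indicator_one h2,
    measureReal_def, measureReal_def, h.1, h.2, sub_self]

theorem variance_eq_one (hX : Measurable X) (h : IsRademacher X P) : Var[X; P] = 1 := by
  have hsq : (fun ω => X ω ^ 2) =ᵐ[P] 1 := by
    filter_upwards [h.ae_abs_eq_one hX] with ω hω
    simp [← sq_abs, hω]
  rw [variance_of_integral_eq_zero hX.aemeasurable (h.integral_eq_zero hX),
    integral_congr_ae hsq]
  simp

end IsRademacher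

section RademacherSum

variable {Ω ι : Type*} [MeasurableSpace Ω] {P : Measure Ω} [IsProbabilityMeasure P]
  {s : ι → Ω → ℝ} (hmeas : ∀ i, Measurable (s i)) (hrad : ∀ i, IsRademacher (s i) P)
  (S : Finset ι) (c : ι → ℝ)
include hmeas hrad

theorem memLp_rademacher_sum : MemLp (fun ω => ∑ i ∈ S, s i ω * c i) 2 P :=
  memLp_finsetSum S fun i _ => ((hrad i).memLp (hmeas i) 2).mul_const (c i)

theorem integral_rademacher_sum : P[fun ω => ∑ i ∈ S, s i ω * c i] = 0 := by
  rw [integral_finsetSum S fun i _ =>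
    ((hrad i).memLp (hmeas i) 1).integrable le_rfl |>.mul_const _]
  exact Finset.sum_eq_zero fun i _ => by
    rw [integral_mul_const, (hrad i).integral_eq_zero (hmeas i), zero_mul]

theorem variance_rademacher_sum (hindep : ∀ i j, i ≠ j → IndepFun (s i) (s j) P) :
    Var[fun ω => ∑ i ∈ S, s i ω * c i; P] = ∑ i ∈ S, c i ^ 2 := by
  have hsum : (fun ω => ∑ i ∈ S, s i ω * c i) = ∑ i ∈ S, fun ω => s i ω * c i := by
    ext ω; simp
  rw [hsum, IndepFun.variance_sum (fun i _ => ((hrad i).memLp (hmeas i) 2).mul_const (c i))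
    fun i _ k _ hik =>
      (hindep i k hik).comp (measurable_id.mul_const _) (measurable_id.mul_const _)]
  exact Finset.sum_congr rfl fun i _ => by
    rw [variance_mul_const, (hrad i).variance_eq_one (hmeas i), one_mul]

theorem measure_le_abs_rademacher_sum_le (hindep : ∀ i j, i ≠ j → IndepFun (s i) (s j) P)
    {u δ : ℝ} (hu : 0 < u) (hvar : ∑ i ∈ S, c i ^ 2 ≤ δ * u ^ 2) :
    P {ω | u ≤ |∑ i ∈ S, s i ω * c i|} ≤ ENNReal.ofReal δ := by
  have := meas_ge_le_variance_div_sq (memLp_rademacher_sum hmeas hrad S c) hu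
  simp only [integral_rademacher_sum hmeas hrad, sub_zero,
    variance_rademacher_sum hmeas hrad S c hindep] at this
  exact this.trans <| ENNReal.ofReal_le_ofReal <| (div_le_iff₀ (by positivity)).2 hvar

end RademacherSum

theorem one_sub_add_le_measure_of_ae {Ω : Type*} [MeasurableSpace Ω] {P : Measure Ω}
    [IsProbabilityMeasure P] {E₁ E₂ G : Set Ω} {a b : ENNReal} (h₁ : P E₁ ≤ a) (h₂ : P E₂ ≤ b)
    (hG : ∀ᵐ ω ∂P, ω ∉ E₁ → ω ∉ E₂ → ω ∈ G) : 1 - (a + b) ≤ P G :=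
  calc 1 - (a + b) ≤ P Set.univ - P (E₁ ∪ E₂) := by
        rw [measure_univ]
        exact tsub_le_tsub_left ((measure_union_le _ _).trans (add_le_add h₁ h₂)) 1
    _ ≤ P (Set.univ \ (E₁ ∪ E₂)) := le_measure_sdiff
    _ ≤ P G := measure_mono_ae <| by
        filter_upwards [hG] with ω hω hω'
        obtain ⟨-, hω₁₂⟩ := hω'
        exact hω (fun h => hω₁₂ (Or.inl h)) (fun h => hω₁₂ (Or.inr h))

theorem round_eq_of_abs_sub_lt_half_s2 {α : Type*} [Field α] [LinearOrder α] [IsStrictOrderedRing α]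
    [FloorRing α] {y : α} {k : ℤ} (h : |y - k| < 1 / 2) : round y = k := by
  rw [round_eq_iff]
  constructor <;> linarith [abs_lt.1 h]

theorem ne_zero_and_abs_div_sub_lt_half {a t m : ℝ} (h : 2 * |t| < |a|) :
    a ≠ 0 ∧ |(m * a + t) / a - m| < 1 / 2 := by
  have ha : 0 < |a| := by linarith [abs_nonneg t]
  refine ⟨abs_pos.1 ha, ?_⟩
  rw [add_div, mul_div_cancel_right₀ _ (abs_pos.1 ha), add_sub_cancel_left, abs_div,
    div_lt_iff₀ ha]
  linarith

theorem two_mul_abs_lt_abs_mul_add {e y r t N u : ℝ} (he : |e| = 1)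
    (hy : (2 * N + 1) * u < |y|) (hr : |r| < u) (ht : |t| < N * u) : 2 * |t| < |e * y + r| := by
  have := abs_sub_abs_le_abs_add (e * y) r
  rw [abs_mul, he, one_mul] at this
  linarith [abs_nonneg t]

theorem Fin.sq_val_sub_val_le {n : ℕ} (i j : Fin n) : ((i : ℝ) - j) ^ 2 ≤ (n : ℝ) ^ 2 := by
  have hi : (i : ℝ) < n := by exact_mod_cast i.isLt
  have hj : (j : ℝ) < n := by exact_mod_cast j.isLt
  have hi0 : (0 : ℝ) ≤ i := Nat.cast_nonneg _
  have hj0 : (0 : ℝ) ≤ j := Nat.cast_nonneg _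
  exact sq_le_sq' (by linarith) (by linarith)

theorem sum_sq_sub_mul_le {n : ℕ} (j : Fin n) (x : Fin n → ℝ) (S : Finset (Fin n)) :
    ∑ i ∈ S, (((i : ℝ) - j) * x i) ^ 2 ≤ (n : ℝ) ^ 2 * ∑ i ∈ S, x i ^ 2 := by
  rw [Finset.mul_sum]
  exact Finset.sum_le_sum fun i _ => by
    rw [mul_pow]
    exact mul_le_mul_of_nonneg_right (Fin.sq_val_sub_val_le i j) (sq_nonneg _)

/- `n + i + 1` is the paper's weight `n + i` under 0-based indexing. Subtracting `n + j + 1`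
times the first measurement cancels the heavy coordinate. -/
theorem sum_shifted_weight_mul_eq {n : ℕ} (j : Fin n) (y z : Fin n → ℝ) :
    ∑ i, ((n : ℝ) + i + 1) * y i * z i =
      ((n : ℝ) + j + 1) * ∑ i, y i * z i +
        ∑ i ∈ Finset.univ.erase j, y i * (((i : ℝ) - j) * z i) := by
  rw [Finset.sum_erase _ (by simp), Finset.mul_sum, ← Finset.sum_add_distrib]
  exact Finset.sum_congr rfl fun i _ => by ring

theorem stmt2_general {Ω : Type*} [MeasurableSpace Ω] (P : Measure Ω) [IsProbabilityMeasure P]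
    (n : ℕ) (s : Fin n → Ω → ℝ)
    (hmeas : ∀ i, Measurable (s i))
    (hunif : ∀ i, P {ω | s i ω = 1} = 1 / 2 ∧ P {ω | s i ω = -1} = 1 / 2)
    (hindep : ∀ i j, i ≠ j → IndepFun (s i) (s j) P)
    (δ : ℝ) (hδ0 : 0 < δ)
    (x : Fin n → ℝ) (j : Fin n)
    (hheavy : |x j| > (8 * (n : ℝ) + 1) * Real.sqrt (1 / δ) *
      Real.sqrt (∑ i ∈ Finset.univ.erase j, x i ^ 2)) :
    1 - ENNReal.ofReal (2 * δ) ≤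
      P {ω | (∑ i, s i ω * x i) ≠ 0 ∧
        |(∑ i, ((n : ℝ) + (i.val : ℝ) + 1) * s i ω * x i) / (∑ i, s i ω * x i) -
          ((n : ℝ) + (j.val : ℝ) + 1)| < 1 / 2 ∧
        round ((∑ i, ((n : ℝ) + (i.val : ℝ) + 1) * s i ω * x i) / (∑ i, s i ω * x i) -
          (n : ℝ)) = (j.val : ℤ) + 1} := by
  have hn : (0 : ℝ) < n := Nat.cast_pos.2 j.pos
  set σ2 := ∑ i ∈ Finset.univ.erase j, x i ^ 2
  -- A threshold strictly above the noise scale `√(σ2 / δ)` keeps Chebyshev valid when `σ2 = 0`.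
  obtain ⟨u, hσu, hux⟩ : ∃ u, Real.sqrt (1 / δ) * Real.sqrt σ2 < u ∧ u < |x j| / (8 * n + 1) :=
    exists_between <| (lt_div_iff₀ (by positivity)).2 (by linarith)
  have hu : 0 < u := lt_of_le_of_lt (by positivity) hσu
  rw [lt_div_iff₀' (by positivity)] at hux
  have hσ2 : σ2 ≤ δ * u ^ 2 := by
    have := pow_lt_pow_left₀ hσu (by positivity) two_ne_zero
    rw [mul_pow, Real.sq_sqrt (by positivity), Real.sq_sqrt (by positivity), one_div,
      inv_mul_lt_iff₀ hδ0] at this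
    exact this.le
  have hvarT : ∑ i ∈ Finset.univ.erase j, (((i : ℝ) - j) * x i) ^ 2 ≤ δ * (n * u) ^ 2 :=
    (sum_sq_sub_mul_le j x _).trans <|
      (mul_le_mul_of_nonneg_left hσ2 (sq_nonneg _)).trans_eq (by ring)
  rw [two_mul, ENNReal.ofReal_add hδ0.le hδ0.le]
  refine one_sub_add_le_measure_of_ae
    (measure_le_abs_rademacher_sum_le hmeas hunif _ x hindep hu hσ2)
    (measure_le_abs_rademacher_sum_le hmeas hunif _ _ hindep (by positivity) hvarT) ?_
  filter_upwards [IsRademacher.ae_abs_eq_one (hmeas j) (hunif j)] with ω hsj hr hT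
  have h2T : 2 * |∑ i ∈ Finset.univ.erase j, s i ω * (((i : ℝ) - j) * x i)| <
      |∑ i, s i ω * x i| := by
    rw [← Finset.add_sum_erase _ _ (Finset.mem_univ j)]
    exact two_mul_abs_lt_abs_mul_add hsj (lt_of_le_of_lt (by gcongr; linarith) hux)
      (not_le.1 hr) (not_le.1 hT)
  obtain ⟨hne, hlt⟩ := ne_zero_and_abs_div_sub_lt_half (m := (n : ℝ) + j + 1) h2T
  rw [← sum_shifted_weight_mul_eq] at hlt
  exact ⟨hne, hlt, round_eq_of_abs_sub_lt_half_s2 (by push_cast; rwa [sub_sub, ← add_assoc])⟩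

/-- Non-adaptive recovery of an Ω(n)-heavy coordinate from two measurements:
with probability at least 1 - 2δ, the nearest integer to b/a - n equals j. -/
theorem stmt2 {Ω : Type*} [MeasurableSpace Ω] (P : Measure Ω) [IsProbabilityMeasure P]
    (n : ℕ) (s : Fin n → Ω → ℝ)
    (hmeas : ∀ i, Measurable (s i))
    (hunif : ∀ i, P {ω | s i ω = 1} = 1 / 2 ∧ P {ω | s i ω = -1} = 1 / 2)
    (hindep : ∀ i j, i ≠ j → IndepFun (s i) (s j) P)
    (δ : ℝ) (hδ0 : 0 < δ) (hδ1 : δ < 1)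
    (x : Fin n → ℝ) (j : Fin n)
    (hheavy : |x j| > (8 * (n : ℝ) + 1) * Real.sqrt (1 / δ) *
      Real.sqrt (∑ i ∈ Finset.univ.erase j, x i ^ 2)) :
    1 - ENNReal.ofReal (2 * δ) ≤
      P {ω | (∑ i, s i ω * x i) ≠ 0 ∧
        |(∑ i, ((n : ℝ) + (i.val : ℝ) + 1) * s i ω * x i) / (∑ i, s i ω * x i) -
          ((n : ℝ) + (j.val : ℝ) + 1)| < 1 / 2 ∧
        round ((∑ i, ((n : ℝ) + (i.val : ℝ) + 1) * s i ω * x i) / (∑ i, s i ω * x i) -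
          (n : ℝ)) = (j.val : ℤ) + 1} :=
  stmt2_general P n s hmeas hunif hindep δ hδ0 x j hheavy
end

section
/- Let D ≥ 1 be an integer, δ ∈ (0,1], C ≥ 2, σ ∈ {−1,1}, and let Y ≥ 0, x_j ∈ ℝ with |x_j| ≥ C·(D/δ)·Y. Let u ∈ ℝ^D and p* ∈ {1,…,D} satisfy |u_{p*}| ≤ Y/√(Dδ) and ‖u‖₂ ≤ Y/√δ. Define v ∈ ℝ^D by v_{p*} = σ·x_j + u_{p*} and v_p = u_p for p ≠ p*. Then |v_{p*}| ≥ (C·D/(2√δ)) · ‖v restricted to {1,…,D}∖{p*}‖₂. -/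
/-!
Off `pstar` the vector `v` agrees with `u`, so that part has norm at most `‖u‖₂ ≤ Y/√δ`, while
`|v pstar| ≥ |xj| - |u pstar| ≥ (CD - 1) Y/δ` because `√(Dδ) ≥ δ`. Since `CD ≥ 2`, the signal
`(CD - 1) Y/δ` is at least `CD/(2√δ) · Y/√δ = CD Y/(2δ)`.
-/

open Finset Real

section

variable {ι : Type*} [Fintype ι] [DecidableEq ι]

lemma sqrt_sum_erase_sq_le_sqrt_sum_sq (f : ι → ℝ) (i : ι) :
    √(∑ p ∈ univ.erase i, f p ^ 2) ≤ √(∑ p, f p ^ 2) :=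
  Real.sqrt_le_sqrt <| sum_le_sum_of_subset_of_nonneg (erase_subset i univ)
    fun p _ _ => sq_nonneg (f p)

lemma sum_erase_update_sq (f : ι → ℝ) (i : ι) (a : ℝ) :
    ∑ p ∈ univ.erase i, Function.update f i a p ^ 2 = ∑ p ∈ univ.erase i, f p ^ 2 :=
  sum_congr rfl fun _ hp => by rw [Function.update_of_ne (ne_of_mem_erase hp)]

end

lemma le_sqrt_mul_of_le_one {D δ : ℝ} (hD : 1 ≤ D) (hδ0 : 0 ≤ δ) (hδ1 : δ ≤ 1) :
    δ ≤ √(D * δ) :=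
  Real.le_sqrt_of_sq_le <| by nlinarith

lemma mul_le_abs_add_of_snr {K δ Y s e N : ℝ} (hK : 2 ≤ K) (hδ : 0 < δ) (hY : 0 ≤ Y)
    (hs : K * Y / δ ≤ |s|) (he : |e| ≤ Y / δ) (hN : N ≤ Y / √δ) :
    K / (2 * √δ) * N ≤ |s + e| := by
  have hsqrt : √δ * √δ = δ := Real.mul_self_sqrt hδ.le
  have hslack : 0 ≤ (K - 2) * Y / (2 * δ) := by
    have : 0 ≤ K - 2 := by linarith
    positivity
  calc K / (2 * √δ) * N ≤ K / (2 * √δ) * (Y / √δ) := by gcongr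
    _ = K * Y / δ - Y / δ - (K - 2) * Y / (2 * δ) := by
      rw [div_mul_div_comm, mul_assoc, hsqrt]; field_simp; ring
    _ ≤ |s| - |e| := by linarith
    _ ≤ |s + e| := by simpa using abs_sub_abs_le_abs_sub s (-e)

/-- Deterministic signal-to-noise amplification step of the noise-shrinking lemma. -/
theorem stmt4 (D : ℕ) (hD : 1 ≤ D) (δ C σ Y xj : ℝ)
    (hδ0 : 0 < δ) (hδ1 : δ ≤ 1) (hC : 2 ≤ C) (hσ : σ = 1 ∨ σ = -1) (hY : 0 ≤ Y)
    (hxj : |xj| ≥ C * ((D : ℝ) / δ) * Y)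
    (u : Fin D → ℝ) (pstar : Fin D)
    (hup : |u pstar| ≤ Y / Real.sqrt ((D : ℝ) * δ))
    (hu : Real.sqrt (∑ p, u p ^ 2) ≤ Y / Real.sqrt δ)
    (v : Fin D → ℝ)
    (hv : v = fun p => if p = pstar then σ * xj + u pstar else u p) :
    |v pstar| ≥ (C * (D : ℝ) / (2 * Real.sqrt δ)) *
      Real.sqrt (∑ p ∈ Finset.univ.erase pstar, v p ^ 2) := by
  have hv' : v = Function.update u pstar (σ * xj + u pstar) := by
    rw [hv]; ext p; rw [Function.update_apply]
  have hD' : (1 : ℝ) ≤ D := by exact_mod_cast hD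
  have hsignal : C * D * Y / δ ≤ |σ * xj| := by
    rcases hσ with rfl | rfl <;> simpa [mul_div_assoc, mul_right_comm] using hxj
  have hperturb : |u pstar| ≤ Y / δ :=
    hup.trans <| div_le_div_of_nonneg_left hY hδ0 (le_sqrt_mul_of_le_one hD' hδ0.le hδ1)
  rw [hv', Function.update_self, sum_erase_update_sq]
  exact mul_le_abs_add_of_snr (by nlinarith) hδ0 hY hsignal hperturb
    ((sqrt_sum_erase_sq_le_sqrt_sum_sq u pstar).trans hu)
end

section
/- Let C′ > 0, and define B_i = 2^{(3/2)^i} and δ_i = 2^{−i}/4 for i ≥ 0. Let n ≥ 2, x ∈ ℝⁿ, j ∈ {1,…,n} with ‖x restricted to {1,…,n}∖{j}‖₂ ≤ |x_j|·δ₀²/(16·C′·B₀²). Let r ≥ 1 and suppose S₀ = {1,…,n} ⊇ S₁ ⊇ ⋯ ⊇ S_r are sets such that for every i < r: j ∈ S_{i+1}, ‖x restricted to S_{i+1}∖{j}‖₂ ≤ ‖x restricted to S_i∖{j}‖₂/(4B_i), and |S_{i+1}| ≤ 1 + |S_i|/(16B_i²). Then: (a) for every i ≤ r, ‖x restricted to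 S_i∖{j}‖₂ ≤ |x_j|·δ_i²/(16·C′·B_i²); and (b) if B_r ≥ n, then S_r = {j}. -/
/-!
Since `B (i + 1) ^ 2 = B i ^ 3` and `δ (i + 1) ^ 2 = δ i ^ 2 / 4`, dividing the bound of round `i`
by `4 * B i` gives exactly the bound of round `i + 1`, so (a) propagates by induction. For (b),
`B r ≤ B (r - 1) ^ 2`, so `n ≤ B r` makes the last size bound read `|S r| ≤ 1 + 1 / 16`; as
`j ∈ S r`, this forces `S r = {j}`.
-/

open Finset

lemma rpow_three_halves_pow_succ_sq {a : ℝ} (ha : 0 ≤ a) (i : ℕ) :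
    (a ^ ((3 / 2 : ℝ) ^ (i + 1))) ^ 2 = (a ^ ((3 / 2 : ℝ) ^ i)) ^ 3 := by
  rw [← Real.rpow_natCast _ 2, ← Real.rpow_natCast _ 3, ← Real.rpow_mul ha, ← Real.rpow_mul ha]
  push_cast
  ring_nf

lemma le_sq_of_sq_eq_cube {b c : ℝ} (hb : 1 ≤ b) (hc : 0 ≤ c) (h : c ^ 2 = b ^ 3) : c ≤ b ^ 2 := by
  refine (pow_le_pow_iff_left₀ hc (by positivity) two_ne_zero).mp ?_
  rw [h, ← pow_mul]
  exact pow_le_pow_right₀ hb (by norm_num)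

lemma le_div_sq_of_shrink {e B δ : ℕ → ℝ} {a c : ℝ} {r : ℕ} (hB : ∀ i, 0 ≤ B i)
    (hBsucc : ∀ i, B (i + 1) ^ 2 = B i ^ 3) (hδsucc : ∀ i, δ (i + 1) ^ 2 = δ i ^ 2 / 4)
    (h0 : e 0 ≤ a * δ 0 ^ 2 / (c * B 0 ^ 2)) (hstep : ∀ i < r, e (i + 1) ≤ e i / (4 * B i)) :
    ∀ i ≤ r, e i ≤ a * δ i ^ 2 / (c * B i ^ 2) := by
  intro i hi
  induction i with
  | zero => exact h0
  | succ k ih =>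
    calc e (k + 1) ≤ e k / (4 * B k) := hstep k hi
      _ ≤ a * δ k ^ 2 / (c * B k ^ 2) / (4 * B k) :=
          div_le_div_of_nonneg_right (ih (by omega)) (by linarith [hB k])
      _ = a * δ (k + 1) ^ 2 / (c * B (k + 1) ^ 2) := by
          rw [hBsucc, hδsucc]
          ring

theorem stmt6_general (C' : ℝ) (n : ℕ) (x : Fin n → ℝ) (j : Fin n)
    (B δ : ℕ → ℝ)
    (hB : ∀ i, B i = (2 : ℝ) ^ ((3 / 2 : ℝ) ^ i))
    (hδ : ∀ i, δ i = 1 / (4 * 2 ^ i))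
    (r : ℕ) (hr : 1 ≤ r)
    (S : ℕ → Finset (Fin n)) (hS0 : S 0 = Finset.univ)
    (hbase : Real.sqrt (∑ m ∈ Finset.univ.erase j, x m ^ 2) ≤
      |x j| * (δ 0) ^ 2 / (16 * C' * (B 0) ^ 2))
    (hstep : ∀ i < r, j ∈ S (i + 1) ∧
      Real.sqrt (∑ m ∈ (S (i + 1)).erase j, x m ^ 2) ≤
        Real.sqrt (∑ m ∈ (S i).erase j, x m ^ 2) / (4 * B i) ∧
      ((S (i + 1)).card : ℝ) ≤ 1 + ((S i).card : ℝ) / (16 * (B i) ^ 2)) :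
    (∀ i ≤ r, Real.sqrt (∑ m ∈ (S i).erase j, x m ^ 2) ≤
      |x j| * (δ i) ^ 2 / (16 * C' * (B i) ^ 2)) ∧
    ((n : ℝ) ≤ B r → S r = {j}) := by
  have hB1 : ∀ i, 1 ≤ B i := fun i => hB i ▸ Real.one_le_rpow one_le_two (by positivity)
  have hBsucc : ∀ i, B (i + 1) ^ 2 = B i ^ 3 := fun i => by
    simp only [hB]; exact rpow_three_halves_pow_succ_sq zero_le_two i
  have hδsucc : ∀ i, δ (i + 1) ^ 2 = δ i ^ 2 / 4 := fun i => by
    simp only [hδ, pow_succ]; ring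
  refine ⟨le_div_sq_of_shrink (fun i => zero_le_one.trans (hB1 i)) hBsucc hδsucc
    (hS0 ▸ hbase) fun i hi => (hstep i hi).2.1, fun hnB => ?_⟩
  obtain ⟨m, rfl⟩ : ∃ m, r = m + 1 := ⟨r - 1, by omega⟩
  obtain ⟨hj, -, hcard⟩ := hstep m m.lt_succ_self
  have hSm : ((S m).card : ℝ) ≤ B m ^ 2 := calc
    ((S m).card : ℝ) ≤ n := by exact_mod_cast (card_le_univ _).trans_eq (Fintype.card_fin n)
    _ ≤ B (m + 1) := hnB
    _ ≤ B m ^ 2 := le_sq_of_sq_eq_cube (hB1 m) (zero_le_one.trans (hB1 _)) (hBsucc m)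
  have hratio : ((S m).card : ℝ) / (16 * B m ^ 2) ≤ 1 / 16 := by
    rw [div_le_iff₀ (by nlinarith [hB1 m])]; linarith
  have hlt : ((S (m + 1)).card : ℝ) < 2 := by linarith
  have hle : (S (m + 1)).card ≤ 1 := Nat.lt_succ_iff.mp (by exact_mod_cast hlt)
  exact eq_singleton_iff_unique_mem.mpr ⟨hj, fun y hy => card_le_one.mp hle y hy j hj⟩

/-- The deterministic induction underlying the O(log log n)-round adaptive
1-sparse recovery lemma. -/
theorem stmt6 (C' : ℝ) (hC' : 0 < C') (n : ℕ) (hn : 2 ≤ n) (x : Fin n → ℝ) (j : Fin n)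
    (B δ : ℕ → ℝ)
    (hB : ∀ i, B i = (2 : ℝ) ^ ((3 / 2 : ℝ) ^ i))
    (hδ : ∀ i, δ i = 1 / (4 * 2 ^ i))
    (r : ℕ) (hr : 1 ≤ r)
    (S : ℕ → Finset (Fin n)) (hS0 : S 0 = Finset.univ)
    (hchain : ∀ i < r, S (i + 1) ⊆ S i)
    (hbase : Real.sqrt (∑ m ∈ Finset.univ.erase j, x m ^ 2) ≤
      |x j| * (δ 0) ^ 2 / (16 * C' * (B 0) ^ 2))
    (hstep : ∀ i < r, j ∈ S (i + 1) ∧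
      Real.sqrt (∑ m ∈ (S (i + 1)).erase j, x m ^ 2) ≤
        Real.sqrt (∑ m ∈ (S i).erase j, x m ^ 2) / (4 * B i) ∧
      ((S (i + 1)).card : ℝ) ≤ 1 + ((S i).card : ℝ) / (16 * (B i) ^ 2)) :
    (∀ i ≤ r, Real.sqrt (∑ m ∈ (S i).erase j, x m ^ 2) ≤
      |x j| * (δ i) ^ 2 / (16 * C' * (B i) ^ 2)) ∧
    ((n : ℝ) ≤ B r → S r = {j}) :=
  stmt6_general C' n x j B δ hB hδ r hr S hS0 hbase hstep
end

section
/- Let k ≥ 1 be an integer, C ≥ 1, and p = 1/(4C²k). Let x ∈ ℝⁿ, let S ⊆ {1,…,n} with |S| = k, and let j ∈ S satisfy x_j² ≥ (1/k)·‖x restricted to {1,…,n}∖S‖₂². Let T be a random subset of {1,…,n} that contains each element independently with probability p. Then with probability at least p/(2e), all of the following hold: T ∩ S = {j}; ‖x restricted to T∖{j}‖₂ ≤ |x_j|/C; and |T| ≤ 1 + n/k. -/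
/-!
The event contains `E ∩ F`, where `E = {T ∩ S = {j}}` is determined by the coordinates in `S`
and `F = {∑_{i ∈ T ∖ S} x_i² ≤ x_j²/C², |T ∖ S| ≤ n/k}` by those outside `S`; hence `E` and
`F` are independent. `P(E) = p (1-p)^(k-1) ≥ p/e` by Bernoulli's inequality since `pk ≤ 1/4`.
The expected mass of `T ∖ S` is `p ∑_{i ∉ S} x_i² ≤ pk x_j² = x_j²/(4C²)` and its expected size is
at most `pn ≤ n/(4k)`, so by Markov's inequality each condition of `F` fails with probability at
most `1/4`, and `P(F) ≥ 1/2`. On `E` we have `T ∖ {j} = T ∖ S`, which turns `F` into the two bounds.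
-/

open MeasureTheory ProbabilityTheory MeasurableSpace
open scoped Finset

lemma Finset.erase_eq_inter_compl_of_inter_eq_singleton {α : Type*} [Fintype α] [DecidableEq α]
    {t s : Finset α} {j : α} (h : t ∩ s = {j}) : t.erase j = t ∩ sᶜ := by
  ext i
  have hi := Finset.ext_iff.1 h i
  have hj := Finset.ext_iff.1 h j
  simp only [Finset.mem_erase, Finset.mem_inter, Finset.mem_compl, Finset.mem_singleton] at hi hj ⊢
  grind

lemma Finset.sqrt_sum_erase_le {ι : Type*} [Fintype ι] [DecidableEq ι] {t s : Finset ι} {j : ι}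
    (h : t ∩ s = {j}) {x : ι → ℝ} {a : ℝ} (ha : 0 ≤ a) (hsum : ∑ i ∈ t ∩ sᶜ, x i ^ 2 ≤ a ^ 2) :
    Real.sqrt (∑ i ∈ t.erase j, x i ^ 2) ≤ a := by
  rwa [Finset.erase_eq_inter_compl_of_inter_eq_singleton h, Real.sqrt_le_left ha]

lemma Finset.card_eq_card_inter_compl_add_one {ι : Type*} [Fintype ι] [DecidableEq ι]
    {t s : Finset ι} {j : ι} (h : t ∩ s = {j}) : #t = #(t ∩ sᶜ) + 1 := by
  rw [← Finset.erase_eq_inter_compl_of_inter_eq_singleton h, Finset.card_erase_add_one]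
  exact (Finset.mem_inter.1 (h ▸ Finset.mem_singleton_self j)).1

lemma Real.exp_neg_one_le_one_sub_pow {p : ℝ} {m : ℕ} (hp : p ≤ 2) (hpm : p * m ≤ 1 / 2) :
    Real.exp (-1) ≤ (1 - p) ^ m := by
  have hbernoulli := one_add_mul_le_pow (a := -p) (by linarith) m
  rw [← sub_eq_add_neg] at hbernoulli
  linarith [Real.exp_neg_one_lt_half]

namespace ProbabilityTheory

variable {Ω ι : Type*} {T : Ω → Finset ι}

lemma setOf_inter_eq_eq_biInter [DecidableEq ι] {s u : Finset ι} (hu : u ⊆ s) :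
    {ω | T ω ∩ s = u} = ⋂ i ∈ s, {ω | i ∈ T ω ↔ i ∈ u} := by
  ext ω
  simp only [Set.mem_ofPred_eq, Set.mem_iInter, Finset.ext_iff, Finset.mem_inter]
  exact ⟨fun h i hi => by simpa [hi] using h i, fun h i => by
    by_cases hi : i ∈ s
    · simpa [hi] using h i hi
    · simp only [hi, and_false, false_iff]; exact fun h' => hi (hu h')⟩

lemma measurableSet_generateFrom_mem_iff (i : ι) (p : Prop) :
    MeasurableSet[generateFrom {{ω | i ∈ T ω}}] {ω | i ∈ T ω ↔ p} := by
  have h := measurableSet_generateFrom (Set.mem_singleton {ω | i ∈ T ω})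
  by_cases hp : p
  · simpa only [hp, iff_true] using h
  · simpa only [hp, iff_false, Set.compl_ofPred] using h.compl

lemma measurableSet_iSup_setOf_inter [DecidableEq ι] (s : Finset ι) (Q : Finset ι → Prop) :
    MeasurableSet[⨆ i ∈ (s : Set ι), generateFrom {{ω | i ∈ T ω}}] {ω | Q (T ω ∩ s)} := by
  classical
  have h : {ω | Q (T ω ∩ s)} = ⋃ u ∈ s.powerset.filter Q, {ω | T ω ∩ s = u} := by
    ext ω; simp
  rw [h]
  refine Finset.measurableSet_biUnion _ fun u hu => ?_
  rw [setOf_inter_eq_eq_biInter (Finset.mem_powerset.1 (Finset.mem_filter.1 hu).1)]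
  exact Finset.measurableSet_biInter _ fun i hi =>
    le_biSup (fun i => generateFrom {{ω | i ∈ T ω}}) (Finset.mem_coe.2 hi) _
      (measurableSet_generateFrom_mem_iff i _)

variable [MeasurableSpace Ω] {P : Measure Ω}

lemma iIndepSet.indepSet_setOf_inter [DecidableEq ι]
    (hindep : iIndepSet (fun i => {ω | i ∈ T ω}) P) (hmeas : ∀ i, MeasurableSet {ω | i ∈ T ω})
    {s t : Finset ι} (hst : Disjoint s t) (Q R : Finset ι → Prop) :
    IndepSet {ω | Q (T ω ∩ s)} {ω | R (T ω ∩ t)} P :=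
  (indep_iSup_of_disjoint (fun i => generateFrom_le (by rintro _ rfl; exact hmeas i))
    ((iIndepSet_iff_iIndep _ _).1 hindep) (Finset.disjoint_coe.2 hst)).indepSet_of_measurableSet
    (measurableSet_iSup_setOf_inter s Q) (measurableSet_iSup_setOf_inter t R)

lemma iIndepSet.measureReal_setOf_inter_eq [DecidableEq ι]
    (hindep : iIndepSet (fun i => {ω | i ∈ T ω}) P) {s u : Finset ι}
    (hmeas : ∀ i ∈ s, MeasurableSet {ω | i ∈ T ω}) {q : ℝ}
    (hq : ∀ i ∈ s, P.real {ω | i ∈ T ω} = q) (hu : u ⊆ s) :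
    P.real {ω | T ω ∩ s = u} = q ^ #u * (1 - q) ^ (#s - #u) := by
  have := hindep.isProbabilityMeasure
  have hfactor : ∀ i ∈ s, (P {ω | i ∈ T ω ↔ i ∈ u}).toReal = if i ∈ u then q else 1 - q := by
    intro i hi
    rw [← measureReal_def]
    by_cases hiu : i ∈ u
    · simpa [hiu] using hq i hi
    · simpa [hiu, Set.compl_ofPred, hq i hi] using probReal_compl_eq_one_sub (μ := P) (hmeas i hi)
  rw [setOf_inter_eq_eq_biInter hu, measureReal_def,
    ((iIndepSet_iff_iIndep _ _).1 hindep).meas_biInter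
      fun i _ => measurableSet_generateFrom_mem_iff i _,
    ENNReal.toReal_prod, Finset.prod_congr rfl hfactor, Finset.prod_ite, Finset.prod_const,
    Finset.prod_const, Finset.filter_mem_eq_inter, Finset.inter_eq_right.2 hu, Finset.filter_not,
    Finset.filter_mem_eq_inter, Finset.inter_eq_right.2 hu, Finset.card_sdiff_of_subset hu]

lemma mul_measureReal_le_sum_inter_le [IsFiniteMeasure P] {s : Finset ι} [DecidableEq ι]
    (hmeas : ∀ i ∈ s, MeasurableSet {ω | i ∈ T ω}) {w : ι → ℝ} (hw : ∀ i ∈ s, 0 ≤ w i) (t : ℝ) :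
    t * P.real {ω | t ≤ ∑ i ∈ T ω ∩ s, w i} ≤ ∑ i ∈ s, w i * P.real {ω | i ∈ T ω} := by
  set f : ι → Ω → ℝ := fun i => {ω | i ∈ T ω}.indicator fun _ => w i
  have hf : ∀ i ∈ s, Integrable (f i) P := fun i hi => (integrable_const _).indicator (hmeas i hi)
  have hsum : ∀ ω, ∑ i ∈ T ω ∩ s, w i = ∑ i ∈ s, f i ω := by
    intro ω
    rw [Finset.inter_comm, ← Finset.filter_mem_eq_inter, Finset.sum_filter]
    simp [f, Set.indicator_apply]
  calc t * P.real {ω | t ≤ ∑ i ∈ T ω ∩ s, w i}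
      = t * P.real {ω | t ≤ ∑ i ∈ s, f i ω} := by simp only [hsum]
    _ ≤ ∫ ω, ∑ i ∈ s, f i ω ∂P :=
        mul_meas_ge_le_integral_of_nonneg
          (ae_of_all _ fun ω =>
            Finset.sum_nonneg fun i hi => Set.indicator_nonneg (fun _ _ => hw i hi) ω)
          (integrable_finsetSum _ hf) t
    _ = ∑ i ∈ s, w i * P.real {ω | i ∈ T ω} := by
        rw [integral_finsetSum _ hf]
        exact Finset.sum_congr rfl fun i hi => by
          rw [integral_indicator_const _ (hmeas i hi), smul_eq_mul, mul_comm]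

lemma measureReal_lt_sum_inter_le [IsFiniteMeasure P] [DecidableEq ι] {s : Finset ι}
    (hmeas : ∀ i ∈ s, MeasurableSet {ω | i ∈ T ω}) {q : ℝ}
    (hq : ∀ i ∈ s, P.real {ω | i ∈ T ω} = q) (hq0 : 0 < q) {w : ι → ℝ} (hw : ∀ i ∈ s, 0 ≤ w i)
    {t c : ℝ} (ht : 0 ≤ t) (hc : 0 ≤ c) (hwt : q * ∑ i ∈ s, w i ≤ c * t) :
    P.real {ω | t < ∑ i ∈ T ω ∩ s, w i} ≤ c := by
  rcases ht.eq_or_lt with rfl | ht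
  -- Markov says nothing at `t = 0`; there `q > 0` forces every weight to vanish instead.
  · have hw0 : ∀ i ∈ s, w i = 0 := by
      refine (Finset.sum_eq_zero_iff_of_nonneg hw).1 (le_antisymm ?_ (Finset.sum_nonneg hw))
      exact le_of_mul_le_mul_left (by simpa using hwt) hq0
    have hempty : {ω | 0 < ∑ i ∈ T ω ∩ s, w i} = ∅ := by
      ext ω
      simp [Finset.sum_eq_zero fun i hi => hw0 i (Finset.mem_inter.1 hi).2]
    simp [hempty, hc]
  calc P.real {ω | t < ∑ i ∈ T ω ∩ s, w i}
      ≤ P.real {ω | t ≤ ∑ i ∈ T ω ∩ s, w i} := measureReal_mono fun _ (h : t < _) => h.le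
    _ ≤ (∑ i ∈ s, w i * P.real {ω | i ∈ T ω}) / t :=
        (le_div_iff₀' ht).2 (mul_measureReal_le_sum_inter_le hmeas hw t)
    _ = q * (∑ i ∈ s, w i) / t := by
        rw [Finset.sum_congr rfl fun i hi => by rw [hq i hi], ← Finset.sum_mul, mul_comm]
    _ ≤ c := div_le_of_le_mul₀ ht.le hc hwt

lemma half_le_measureReal_sum_inter_le_and_card_le [IsProbabilityMeasure P] [DecidableEq ι]
    {s : Finset ι} (hmeas : ∀ i ∈ s, MeasurableSet {ω | i ∈ T ω}) {q : ℝ}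
    (hq : ∀ i ∈ s, P.real {ω | i ∈ T ω} = q) (hq0 : 0 < q) {w : ι → ℝ} (hw : ∀ i ∈ s, 0 ≤ w i)
    {a b : ℝ} (ha : 0 ≤ a) (hb : 0 ≤ b) (hwa : q * ∑ i ∈ s, w i ≤ a / 4)
    (hcard : q * #s ≤ b / 4) :
    1 / 2 ≤ P.real {ω | ∑ i ∈ T ω ∩ s, w i ≤ a ∧ (#(T ω ∩ s) : ℝ) ≤ b} := by
  have hheavy := measureReal_lt_sum_inter_le hmeas hq hq0 hw ha (c := 1 / 4) (by norm_num)
    (by linarith)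
  have hmany := measureReal_lt_sum_inter_le hmeas hq hq0 (w := fun _ => 1)
    (fun _ _ => zero_le_one) hb (c := 1 / 4) (by norm_num) (by rw [← Finset.cast_card]; linarith)
  simp only [← Finset.cast_card] at hmany
  have hcover : Set.univ ⊆ {ω | ∑ i ∈ T ω ∩ s, w i ≤ a ∧ (#(T ω ∩ s) : ℝ) ≤ b} ∪
      {ω | a < ∑ i ∈ T ω ∩ s, w i} ∪ {ω | b < (#(T ω ∩ s) : ℝ)} := by
    intro ω _
    simp only [Set.mem_union, Set.mem_ofPred_eq]
    rcases le_or_gt (∑ i ∈ T ω ∩ s, w i) a with h₁ | h₁ <;>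
      rcases le_or_gt (#(T ω ∩ s) : ℝ) b with h₂ | h₂ <;> simp_all
  have hunion := (measureReal_mono (μ := P) hcover).trans <|
    (measureReal_union_le _ _).trans (add_le_add_left (measureReal_union_le _ _) _)
  rw [probReal_univ] at hunion
  linarith

lemma iIndepSet.half_mul_le_measureReal_isolated [Fintype ι] [DecidableEq ι]
    (hindep : iIndepSet (fun i => {ω | i ∈ T ω}) P) (hmeas : ∀ i, MeasurableSet {ω | i ∈ T ω})
    {q : ℝ} (hq : ∀ i, P.real {ω | i ∈ T ω} = q) (hq0 : 0 < q) {S : Finset ι} {j : ι}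
    (hj : j ∈ S) {w : ι → ℝ} (hw : ∀ i, 0 ≤ w i) {a b : ℝ} (ha : 0 ≤ a) (hb : 0 ≤ b)
    (hwa : q * ∑ i ∈ Sᶜ, w i ≤ a / 4) (hcard : q * #Sᶜ ≤ b / 4) :
    q * (1 - q) ^ (#S - 1) / 2 ≤
      P.real {ω | T ω ∩ S = {j} ∧ ∑ i ∈ T ω ∩ Sᶜ, w i ≤ a ∧ (#(T ω ∩ Sᶜ) : ℝ) ≤ b} := by
  have := hindep.isProbabilityMeasure
  have hE := hindep.measureReal_setOf_inter_eq (fun i _ => hmeas i) (fun i _ => hq i)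
    (Finset.singleton_subset_iff.2 hj)
  have hF := half_le_measureReal_sum_inter_le_and_card_le (fun i _ => hmeas i) (fun i _ => hq i)
    hq0 (fun i _ => hw i) ha hb hwa hcard
  have hind := hindep.indepSet_setOf_inter hmeas (s := S) disjoint_compl_right (fun u => u = {j})
    (fun u => ∑ i ∈ u, w i ≤ a ∧ (#u : ℝ) ≤ b)
  rw [Finset.card_singleton, pow_one] at hE
  calc q * (1 - q) ^ (#S - 1) / 2 = P.real {ω | T ω ∩ S = {j}} * (1 / 2) := by rw [hE]; ring
    _ ≤ P.real {ω | T ω ∩ S = {j}} *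
          P.real {ω | ∑ i ∈ T ω ∩ Sᶜ, w i ≤ a ∧ (#(T ω ∩ Sᶜ) : ℝ) ≤ b} := by gcongr
    _ = _ := by rw [measureReal_def, measureReal_def, ← ENNReal.toReal_mul,
          ← hind.measure_inter_eq_mul]; rfl

end ProbabilityTheory

/-- Subsampling core of the reduction from k-sparse to 1-sparse recovery: after
subsampling at rate p = 1/(4C²k), a fixed (1/k)-heavy hitter j is, with probability
at least p/(2e), isolated from the other top-k coordinates and dominates. -/
theorem stmt9 {Ω : Type*} [MeasurableSpace Ω] (P : Measure Ω) [IsProbabilityMeasure P]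
    (n k : ℕ) (hk : 1 ≤ k) (C : ℝ) (hC : 1 ≤ C) (p : ℝ) (hp : p = 1 / (4 * C ^ 2 * k))
    (x : Fin n → ℝ) (S : Finset (Fin n)) (hScard : S.card = k)
    (j : Fin n) (hj : j ∈ S)
    (hheavy : x j ^ 2 ≥ (1 / (k : ℝ)) * ∑ i ∈ Sᶜ, x i ^ 2)
    (T : Ω → Finset (Fin n))
    (hmeas : ∀ i, MeasurableSet {ω | i ∈ T ω})
    (hber : ∀ i, P {ω | i ∈ T ω} = ENNReal.ofReal p)
    (hindep : iIndepSet (fun i : Fin n => {ω | i ∈ T ω}) P) :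
    ENNReal.ofReal (p / (2 * Real.exp 1)) ≤
      P {ω | T ω ∩ S = {j} ∧
        Real.sqrt (∑ i ∈ (T ω).erase j, x i ^ 2) ≤ |x j| / C ∧
        ((T ω).card : ℝ) ≤ 1 + (n : ℝ) / k} := by
  have hk0 : (0 : ℝ) < k := Nat.cast_pos.2 hk
  have hp0 : 0 < p := by rw [hp]; positivity
  have hpkC : p * k = 1 / (4 * C ^ 2) := by rw [hp]; field_simp
  have hpk : p * k ≤ 1 / 4 := by rw [hpkC]; gcongr; nlinarith
  have hwa : p * ∑ i ∈ Sᶜ, x i ^ 2 ≤ x j ^ 2 / C ^ 2 / 4 := by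
    rw [ge_iff_le, one_div, inv_mul_le_iff₀ hk0] at hheavy
    calc p * ∑ i ∈ Sᶜ, x i ^ 2 ≤ p * k * x j ^ 2 := by rw [mul_assoc]; gcongr
      _ = x j ^ 2 / C ^ 2 / 4 := by rw [hpkC]; field_simp
  have hcard : p * #Sᶜ ≤ n / k / 4 := by
    have hcompl : (#Sᶜ : ℝ) ≤ n := mod_cast (Finset.card_le_univ _).trans_eq (Fintype.card_fin n)
    rw [div_div, le_div_iff₀ (by positivity)]
    nlinarith [mul_le_mul_of_nonneg_right hpk (Nat.cast_nonneg (α := ℝ) n)]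
  have hexp : Real.exp (-1) ≤ (1 - p) ^ (k - 1) := by
    have hpred : ((k - 1 : ℕ) : ℝ) ≤ k := Nat.cast_le.2 (Nat.sub_le k 1)
    have hk1 : (1 : ℝ) ≤ k := Nat.one_le_cast.2 hk
    refine Real.exp_neg_one_le_one_sub_pow ?_ ?_ <;> nlinarith
  calc ENNReal.ofReal (p / (2 * Real.exp 1)) ≤ ENNReal.ofReal (p * (1 - p) ^ (#S - 1) / 2) := by
        refine ENNReal.ofReal_le_ofReal ?_
        rw [hScard, show p / (2 * Real.exp 1) = p * Real.exp (-1) / 2 by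
          rw [Real.exp_neg]; field_simp]
        gcongr
    _ ≤ ENNReal.ofReal (P.real _) := ENNReal.ofReal_le_ofReal <|
        hindep.half_mul_le_measureReal_isolated hmeas
          (fun i => by rw [measureReal_def, hber, ENNReal.toReal_ofReal hp0.le]) hp0 hj
          (fun i => sq_nonneg (x i)) (by positivity) (by positivity) hwa hcard
    _ ≤ _ := by
        rw [ofReal_measureReal]
        exact measure_mono fun ω ⟨hEω, hsumω, hcardω⟩ =>
          ⟨hEω, Finset.sqrt_sum_erase_le hEω (by positivity) (by rwa [div_pow, sq_abs]), by
            rw [Finset.card_eq_card_inter_compl_add_one hEω]; push_cast; linarith⟩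
end

section
/- Let x ∈ ℝⁿ, let k ≥ 1 be an integer and ε > 0. Let H be a set of k indices maximizing ‖x restricted to H‖₂ over all sets of size k, and let H' = {j ∈ H : x_j² ≥ (ε/k)·‖x restricted to the complement of H‖₂²}. Let m ≥ 0 be an integer and let T ⊆ {1,…,n} satisfy |H' ∖ T| ≤ m. Let y = x restricted to the complement of T. Then err(y, m) ≤ (1+ε)·err(x, k), where err(v, s) = min over sets S of size s of ‖v restricted to the complement of S‖₂². -/
/-! The k largest coordinates H are an optimal k-sparse support, so err(x, k) = ‖x_{Hᶜ}‖₂² =: C.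
Taking the m-set H' ∖ T as support for y, the remaining mass of y lies outside H' ∪ T, hence is at
most ‖x_{H'ᶜ}‖₂² = ‖x_{H ∖ H'}‖₂² + C. Each of the at most k light coordinates in H ∖ H' contributes
less than (ε/k)·C, so the total is at most (1 + ε)·C. -/

/-- `errN n v s` is the best s-sparse approximation error of v:
the minimum over sets S of at most s coordinates of ‖v restricted to Sᶜ‖₂². -/
noncomputable def errN (n : ℕ) (v : Fin n → ℝ) (s : ℕ) : ℝ :=
  sInf {e : ℝ | ∃ S : Finset (Fin n), S.card ≤ s ∧ e = ∑ i ∈ Sᶜ, v i ^ 2}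

open Finset

section Sums

variable {ι : Type*}

theorem Finset.sum_le_of_card_le_of_forall_le_div {s : Finset ι} {f : ι → ℝ} {k : ℕ} {c : ℝ}
    (hc : 0 ≤ c) (hs : #s ≤ k) (hf : ∀ i ∈ s, f i ≤ c / k) : ∑ i ∈ s, f i ≤ c := by
  rcases k.eq_zero_or_pos with rfl | hk
  · simpa [card_eq_zero.1 (Nat.le_zero.1 hs)] using hc
  calc ∑ i ∈ s, f i ≤ #s • (c / k) := sum_le_card_nsmul s f _ hf
    _ ≤ k * (c / k) := by rw [nsmul_eq_mul]; gcongr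
    _ = c := mul_div_cancel₀ c (by positivity)

variable [Fintype ι] [DecidableEq ι]

theorem Finset.sum_compl_le_sum_compl_of_card_le {f : ι → ℝ} (hf : ∀ i, 0 ≤ f i)
    {H S : Finset ι} {k : ℕ} (hH : #H = k)
    (hmax : ∀ S : Finset ι, #S = k → ∑ i ∈ S, f i ≤ ∑ i ∈ H, f i) (hS : #S ≤ k) :
    ∑ i ∈ Hᶜ, f i ≤ ∑ i ∈ Sᶜ, f i := by
  obtain ⟨S', hSS', hS'⟩ := exists_superset_card_eq hS (hH ▸ card_le_univ H)
  have hS'H := hmax S' hS'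
  have hsplitS' := sum_add_sum_compl S' f
  have hsplitH := sum_add_sum_compl H f
  have hS'S : ∑ i ∈ S'ᶜ, f i ≤ ∑ i ∈ Sᶜ, f i :=
    sum_le_sum_of_subset_of_nonneg (compl_subset_compl.2 hSS') fun i _ _ => hf i
  linarith

theorem Finset.sum_compl_sdiff_ite_sq_le (x : ι → ℝ) (A T : Finset ι) :
    ∑ i ∈ (A \ T)ᶜ, (if i ∈ T then 0 else x i) ^ 2 ≤ ∑ i ∈ Aᶜ, x i ^ 2 :=
  calc ∑ i ∈ (A \ T)ᶜ, (if i ∈ T then 0 else x i) ^ 2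
      = ∑ i ∈ (A \ T)ᶜ with i ∉ T, x i ^ 2 := by
        rw [sum_filter]
        refine sum_congr rfl fun i _ => ?_
        split_ifs <;> simp
    _ ≤ ∑ i ∈ Aᶜ, x i ^ 2 :=
        sum_le_sum_of_subset_of_nonneg
          (fun i => by
            simp only [mem_filter, mem_compl, mem_sdiff, not_and, Decidable.not_not, and_imp]
            tauto)
          fun i _ _ => sq_nonneg _

end Sums

theorem errN_le {n s : ℕ} (v : Fin n → ℝ) {S : Finset (Fin n)} (hS : #S ≤ s) :
    errN n v s ≤ ∑ i ∈ Sᶜ, v i ^ 2 :=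
  csInf_le ⟨0, by rintro e ⟨S, -, rfl⟩; positivity⟩ ⟨S, hS, rfl⟩

theorem le_errN {n s : ℕ} {v : Fin n → ℝ} {c : ℝ}
    (h : ∀ S : Finset (Fin n), #S ≤ s → c ≤ ∑ i ∈ Sᶜ, v i ^ 2) : c ≤ errN n v s :=
  le_csInf ⟨_, ∅, by simp, rfl⟩ fun _ ⟨S, hS, he⟩ => he ▸ h S hS

theorem errN_eq_sum_compl_of_card_eq {n k : ℕ} {x : Fin n → ℝ} {H : Finset (Fin n)}
    (hH : #H = k) (hmax : ∀ S : Finset (Fin n), #S = k → ∑ i ∈ S, x i ^ 2 ≤ ∑ i ∈ H, x i ^ 2) :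
    errN n x k = ∑ i ∈ Hᶜ, x i ^ 2 :=
  le_antisymm (errN_le x hH.le) <| le_errN fun _ hS =>
    sum_compl_le_sum_compl_of_card_le (fun i => sq_nonneg (x i)) hH hmax hS

theorem stmt10_general (n k : ℕ) (ε : ℝ) (hε : 0 < ε) (x : Fin n → ℝ)
    (H : Finset (Fin n)) (hHcard : H.card = k)
    (hHmax : ∀ S : Finset (Fin n), S.card = k → ∑ i ∈ S, x i ^ 2 ≤ ∑ i ∈ H, x i ^ 2)
    (H' : Finset (Fin n))
    (hH' : ∀ i, i ∈ H' ↔ i ∈ H ∧ (ε / k) * ∑ i' ∈ Hᶜ, x i' ^ 2 ≤ x i ^ 2)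
    (m : ℕ) (T : Finset (Fin n)) (hT : (H' \ T).card ≤ m)
    (y : Fin n → ℝ) (hy : y = fun i => if i ∈ T then 0 else x i) :
    errN n y m ≤ (1 + ε) * errN n x k := by
  set C := ∑ i ∈ Hᶜ, x i ^ 2
  have hH'H : H' ⊆ H := fun i hi => ((hH' i).1 hi).1
  have hlight : ∑ i ∈ H \ H', x i ^ 2 ≤ ε * C := by
    refine sum_le_of_card_le_of_forall_le_div (by positivity)
      (hHcard ▸ card_le_card sdiff_subset) fun i hi => ?_
    rw [mem_sdiff, hH', not_and, not_le] at hi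
    rw [← div_mul_eq_mul_div]
    exact (hi.2 hi.1).le
  have hsplitH' := sum_compl_add_sum H' fun i => x i ^ 2
  have hsplitH := sum_compl_add_sum H fun i => x i ^ 2
  have hsplitH'H := sum_sdiff hH'H (f := fun i => x i ^ 2)
  rw [errN_eq_sum_compl_of_card_eq hHcard hHmax]
  calc errN n y m ≤ ∑ i ∈ (H' \ T)ᶜ, y i ^ 2 := errN_le y hT
    _ ≤ ∑ i ∈ H'ᶜ, x i ^ 2 := hy ▸ sum_compl_sdiff_ite_sq_le x H' T
    _ ≤ (1 + ε) * C := by linarith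

/-- The deterministic part of the recursion lemma: if all but m of the ε/k-heavy
hitters have been captured in T, then removing T leaves a vector whose best
m-sparse approximation error is at most (1+ε) times the best k-sparse error. -/
theorem stmt10 (n k : ℕ) (hk : 1 ≤ k) (ε : ℝ) (hε : 0 < ε) (x : Fin n → ℝ)
    (H : Finset (Fin n)) (hHcard : H.card = k)
    (hHmax : ∀ S : Finset (Fin n), S.card = k → ∑ i ∈ S, x i ^ 2 ≤ ∑ i ∈ H, x i ^ 2)
    (H' : Finset (Fin n))
    (hH' : ∀ i, i ∈ H' ↔ i ∈ H ∧ (ε / k) * ∑ i' ∈ Hᶜ, x i' ^ 2 ≤ x i ^ 2)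
    (m : ℕ) (T : Finset (Fin n)) (hT : (H' \ T).card ≤ m)
    (y : Fin n → ℝ) (hy : y = fun i => if i ∈ T then 0 else x i) :
    errN n y m ≤ (1 + ε) * errN n x k :=
  stmt10_general n k ε hε x H hHcard hHmax H' hH' m T hT y hy
end

section
/- Define a sequence of reals by f₀ = 1/32 and f_{i+1} = 2^{−1/(4^{i+1} f_i)} for i ≥ 0. Then f_i ≤ 16^{−(i+1)} for every i ≥ 0, and Σ_{i=0}^∞ 2^i·(i+1)·√(f_i) ≤ 1. -/
/-!
If `f i ≤ 16^{-(i+1)}`, then `4^{i+1} f i ≤ 4^{-(i+1)}`, so the exponent `1 / (4^{i+1} f i)`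
is at least `4^{i+1} ≥ 4 (i + 2)` (for `i ≥ 1`) and `f (i+1) ≤ 2^{-4(i+2)} = 16^{-(i+2)}`. Hence
`√(f i) ≤ 4^{-(i+1)}`, and the series is dominated by `¼ ∑ (i+1) 2^{-i} = ¼ · 4 = 1`.
-/

open Real

theorem hasSum_add_one_mul_geometric {𝕜 : Type*} [NormedDivisionRing 𝕜] [HasSummableGeomSeries 𝕜]
    {r : 𝕜} (hr : ‖r‖ < 1) : HasSum (fun n : ℕ ↦ ((n : 𝕜) + 1) * r ^ n) (1 / (1 - r) ^ 2) := by
  simpa using hasSum_choose_mul_geometric_of_norm_lt_one 1 (r := r) hr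

theorem hasSum_two_pow_mul_add_one_mul_quarter_pow :
    HasSum (fun n : ℕ ↦ (2 : ℝ) ^ n * ((n : ℝ) + 1) * (1 / 4) ^ (n + 1)) 1 := by
  have h := (hasSum_add_one_mul_geometric (r := (1 / 2 : ℝ)) (by norm_num)).mul_right (1 / 4)
  rw [show (1 / (1 - 1 / 2) ^ 2 * (1 / 4) : ℝ) = 1 by norm_num] at h
  refine h.congr_fun fun n ↦ ?_
  rw [pow_succ, show (1 / 2 : ℝ) ^ n = 2 ^ n * (1 / 4) ^ n by rw [← mul_pow]; norm_num]
  ring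

theorem sqrt_one_div_sixteen_pow (n : ℕ) : √(1 / 16 ^ n) = (1 / 4) ^ n := by
  rw [show (1 / 16 ^ n : ℝ) = ((1 / 4) ^ n) ^ 2 by
      rw [← pow_mul, mul_comm, pow_mul]; norm_num [div_pow],
    sqrt_sq (by positivity)]

theorem tsum_two_pow_mul_add_one_mul_sqrt_le_one {a : ℕ → ℝ} (ha : ∀ n, a n ≤ 1 / 16 ^ (n + 1)) :
    ∑' n : ℕ, (2 : ℝ) ^ n * ((n : ℝ) + 1) * √(a n) ≤ 1 := by
  have hle : ∀ n : ℕ, (2 : ℝ) ^ n * ((n : ℝ) + 1) * √(a n)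
      ≤ (2 : ℝ) ^ n * ((n : ℝ) + 1) * (1 / 4) ^ (n + 1) := fun n ↦ by
    rw [← sqrt_one_div_sixteen_pow]
    gcongr
    exact ha n
  have hsum := hasSum_two_pow_mul_add_one_mul_quarter_pow
  exact ((hsum.summable.of_nonneg_of_le (fun n ↦ by positivity) hle).tsum_le_tsum hle
    hsum.summable).trans_eq hsum.tsum_eq

theorem four_mul_add_one_le_four_pow {n : ℕ} (hn : 2 ≤ n) : 4 * ((n : ℝ) + 1) ≤ 4 ^ n := by
  induction n, hn using Nat.le_induction with
  | base => norm_num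
  | succ n hn ih =>
    push_cast
    rw [pow_succ]
    nlinarith

theorem two_rpow_neg_le_one_div_sixteen_pow {y : ℝ} {n : ℕ} (hy : 4 * n ≤ y) :
    (2 : ℝ) ^ (-y) ≤ 1 / 16 ^ n :=
  calc (2 : ℝ) ^ (-y) ≤ 2 ^ (-(4 * n : ℝ)) :=
        rpow_le_rpow_of_exponent_le one_le_two (neg_le_neg hy)
    _ = 1 / 16 ^ n := by
        rw [rpow_neg zero_le_two, rpow_mul zero_le_two, rpow_natCast, one_div]
        norm_num

theorem le_one_div_four_pow_mul {x : ℝ} {n : ℕ} (hx : 0 < x) (h : x ≤ 1 / 16 ^ n) :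
    4 ^ n ≤ 1 / (4 ^ n * x) := by
  rw [le_one_div (by positivity) (by positivity)]
  calc 4 ^ n * x ≤ 4 ^ n * (1 / 16 ^ n) := by gcongr
    _ = 1 / 4 ^ n := by
        rw [show (16 : ℝ) ^ n = 4 ^ n * 4 ^ n by rw [← mul_pow]; norm_num]
        field_simp

theorem schedule_pos {f : ℕ → ℝ} (h0 : f 0 = 1 / 32)
    (hs : ∀ i : ℕ, f (i + 1) = (2 : ℝ) ^ (-(1 / ((4 : ℝ) ^ (i + 1) * f i)))) : ∀ i, 0 < f i
  | 0 => by rw [h0]; norm_num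
  | i + 1 => by rw [hs]; positivity

theorem schedule_le_one_div_sixteen_pow {f : ℕ → ℝ} (h0 : f 0 = 1 / 32)
    (hs : ∀ i : ℕ, f (i + 1) = (2 : ℝ) ^ (-(1 / ((4 : ℝ) ^ (i + 1) * f i)))) :
    ∀ i, f i ≤ 1 / 16 ^ (i + 1)
  | 0 => by rw [h0]; norm_num
  -- `4 * (n + 1) ≤ 4 ^ n` fails for `n = 1`, so `f 1 = 2 ^ (-8)` is checked by hand.
  | 1 => by
    rw [hs, h0]
    exact two_rpow_neg_le_one_div_sixteen_pow (by norm_num)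
  | i + 2 => by
    rw [hs]
    refine two_rpow_neg_le_one_div_sixteen_pow (le_trans ?_ (le_one_div_four_pow_mul
      (schedule_pos h0 hs _) (schedule_le_one_div_sixteen_pow h0 hs (i + 1))))
    exact_mod_cast four_mul_add_one_le_four_pow (n := i + 2) le_add_self

/-- The sparsity schedule f₀ = 1/32, f_{i+1} = 2^{-1/(4^{i+1} f_i)} decays at least
as fast as 16^{-(i+1)}, and the measurement-count series Σ 2^i (i+1) √f_i is at most 1. -/
theorem stmt14 (f : ℕ → ℝ) (h0 : f 0 = 1 / 32)
    (hs : ∀ i : ℕ, f (i + 1) = (2 : ℝ) ^ (-(1 / ((4 : ℝ) ^ (i + 1) * f i)))) :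
    (∀ i : ℕ, f i ≤ 1 / 16 ^ (i + 1)) ∧
    ∑' i : ℕ, (2 : ℝ) ^ i * ((i : ℝ) + 1) * Real.sqrt (f i) ≤ 1 :=
  have hle := schedule_le_one_div_sixteen_pow h0 hs
  ⟨hle, tsum_two_pow_mul_add_one_mul_sqrt_le_one hle⟩
end
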